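/- For positive constants w, η, κ, ν with ν ≥ 2, the function g(x) = (w/η)·U(x) + κ·x^ν is strictly convex on (F/T, ∞), and attains a unique minimizer on any nonempty closed interval [a, b] ⊆ (F/T, ∞). -/

import Mathlib

/-!
On `(F/T, ∞)` the exponent `c x / (T x - F) = c/T + (c F/T) (T x - F)⁻¹` is convex, so `U`, a
positive multiple of `exp` of it minus a constant, is convex, while `κ x^ν` is strictly convex
because `ν > 1`; hence `g` is strictly convex. Being convex on an open interval, `g` is
continuous there, so it attains its minimum on the compact `[a, b]`, and strict convexity makes
the minimizer unique.
-/

open Set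

theorem ConvexOn.exp {E : Type*} [AddCommMonoid E] [Module ℝ E] {s : Set E} {f : E → ℝ}
    (hf : ConvexOn ℝ s f) : ConvexOn ℝ s fun x => Real.exp (f x) :=
  ⟨hf.1, fun x hx y hy a b ha hb hab => calc
    Real.exp (f (a • x + b • y)) ≤ Real.exp (a • f x + b • f y) :=
        Real.exp_le_exp.2 (hf.2 hx hy ha hb hab)
    _ ≤ a • Real.exp (f x) + b • Real.exp (f y) :=
        convexOn_exp.2 (mem_univ _) (mem_univ _) ha hb hab⟩

theorem StrictConvexOn.const_mul {𝕜 E : Type*} [Field 𝕜] [LinearOrder 𝕜] [IsStrictOrderedRing 𝕜]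
    [AddCommMonoid E] [Module 𝕜 E] {s : Set E} {f : E → 𝕜} {c : 𝕜}
    (hf : StrictConvexOn 𝕜 s f) (hc : 0 < c) : StrictConvexOn 𝕜 s fun x => c * f x := by
  refine ⟨hf.1, fun x hx y hy hxy a b ha hb hab => ?_⟩
  calc c * f (a • x + b • y) < c * (a • f x + b • f y) :=
        mul_lt_mul_of_pos_left (hf.2 hx hy hxy ha hb hab) hc
    _ = a • (c * f x) + b • (c * f y) := by simp only [smul_eq_mul]; ring

theorem StrictConvexOn.existsUnique_isMinOn {E : Type*} [AddCommMonoid E] [Module ℝ E]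
    [TopologicalSpace E] {s : Set E} {f : E → ℝ} (hf : StrictConvexOn ℝ s f)
    (hf' : ContinuousOn f s) (hs : IsCompact s) (hne : s.Nonempty) :
    ∃! x, x ∈ s ∧ IsMinOn f s x := by
  obtain ⟨x, hx, hmin⟩ := hs.exists_isMinOn hne hf'
  exact ⟨x, ⟨hx, hmin⟩, fun y ⟨hy, hymin⟩ => hf.eq_of_isMinOn hymin hmin hy hx⟩

theorem convexOn_mul_sub_inv {T F : ℝ} (hT : 0 < T) :
    ConvexOn ℝ (Ioi (F / T)) fun x => (T * x - F)⁻¹ := by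
  let L : ℝ →ᵃ[ℝ] ℝ := (T • LinearMap.id : ℝ →ₗ[ℝ] ℝ).toAffineMap - AffineMap.const ℝ ℝ F
  have hL : L ⁻¹' Ioi 0 = Ioi (F / T) := by
    ext x
    simp [L, div_lt_iff₀ hT, mul_comm]
  have h := (convexOn_zpow (𝕜 := ℝ) (-1)).comp_affineMap L
  rw [hL] at h
  exact h.congr fun x _ => by simp [L]

theorem convexOn_div_mul_sub {T F : ℝ} (hT : 0 < T) (hF : 0 ≤ F) :
    ConvexOn ℝ (Ioi (F / T)) fun x => x / (T * x - F) := by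
  refine (((convexOn_mul_sub_inv hT).smul (div_nonneg hF hT.le)).add_const T⁻¹).congr
    fun x hx => ?_
  have hden : T * x - F ≠ 0 := by
    have := (div_lt_iff₀ hT).mp (mem_Ioi.mp hx)
    linarith
  simp only [Pi.add_apply, smul_eq_mul]
  field_simp
  ring

theorem stmt_5 (σ2 h B D T F w η κ ν : ℝ) (hσ : 0 < σ2) (hh : 0 < h) (hB : 0 < B)
    (hD : 0 < D) (hT : 0 < T) (hF : 0 < F)
    (hw : 0 < w) (hη : 0 < η) (hκ : 0 < κ) (hν : 2 ≤ ν)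
    (U g : ℝ → ℝ)
    (hU : ∀ x : ℝ, U x =
      (σ2 / h) * (Real.exp ((Real.log 2 / B) * (D * x) / (T * x - F)) - 1))
    (hg : ∀ x : ℝ, g x = (w / η) * U x + κ * x ^ ν) :
    StrictConvexOn ℝ (Set.Ioi (F / T)) g ∧
    ∀ a b : ℝ, F / T < a → a ≤ b →
      ∃! x : ℝ, x ∈ Set.Icc a b ∧ ∀ y ∈ Set.Icc a b, g x ≤ g y := by
  have hexponent : ConvexOn ℝ (Ioi (F / T))
      fun x => Real.log 2 / B * (D * x) / (T * x - F) :=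
    ((convexOn_div_mul_sub hT hF.le).smul (by positivity : 0 ≤ Real.log 2 / B * D)).congr
      fun x _ => by simp only [smul_eq_mul]; ring
  have hUconv : ConvexOn ℝ (Ioi (F / T)) U :=
    ((hexponent.exp.add_const (-1)).smul (by positivity : 0 ≤ σ2 / h)).congr
      fun x _ => by simp only [Pi.add_apply, smul_eq_mul, hU]; ring
  have hpow : StrictConvexOn ℝ (Ioi (F / T)) fun x => κ * x ^ ν :=
    ((strictConvexOn_rpow (by linarith)).subset (Ioi_subset_Ici (by positivity))
      (convex_Ioi _)).const_mul hκ
  have hgconv : StrictConvexOn ℝ (Ioi (F / T)) g :=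
    ((hUconv.smul (by positivity : 0 ≤ w / η)).add_strictConvexOn hpow).congr
      fun x _ => (hg x).symm
  have hgcont : ContinuousOn g (Ioi (F / T)) := by
    simpa using hgconv.convexOn.continuousOn_interior
  refine ⟨hgconv, fun a b ha hab => ?_⟩
  have hsub : Icc a b ⊆ Ioi (F / T) := fun x hx => ha.trans_le hx.1
  simpa [isMinOn_iff] using (hgconv.subset hsub (convex_Icc a b)).existsUnique_isMinOn
    (hgcont.mono hsub) isCompact_Icc (nonempty_Icc.2 hab)
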